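/- arXiv:1409.0298 — 2 statements merged into one kernel-verified Lean document; each statement's English description precedes it below -/
import Mathlib

section
/- If every G-stopping time is an F-pseudo-stopping time, then F is immersed in G, i.e., every F-local martingale is a G-local martingale. (It suffices to show every uniformly integrable F-martingale is a uniformly integrable G-martingale, using the optional stopping characterization of martingales.) -/
open MeasureTheory Filter Function Set
open scoped ENNReal NNReal

noncomputable section

namespace PaperPST

variable {Ω : Type*}

/-- The value of the process `M` at the (possibly infinite) random time `τ`;
the time index `ℝ≥0∞` includes `∞ = ⊤`, so `M ⊤` plays the role of `M_∞`. -/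
def stoppedAt (M : ℝ≥0∞ → Ω → ℝ) (τ : Ω → ℝ≥0∞) : Ω → ℝ := fun ω => M (τ ω) ω

/-- `τ` is an `F`-pseudo-stopping time: every uniformly integrable `F`-martingale `M`
(formalized as a martingale indexed by `ℝ≥0∞`, i.e. closed by its terminal value `M ⊤`)
satisfies `E (M_τ) = E (M_0)`. -/
def IsPseudoStoppingTime {m : MeasurableSpace Ω} (F : Filtration ℝ≥0∞ m) (μ : Measure Ω)
    (τ : Ω → ℝ≥0∞) : Prop :=
  ∀ M : ℝ≥0∞ → Ω → ℝ, Martingale M F μ → (∀ t, Integrable (M t) μ) →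
    ∫ ω, stoppedAt M τ ω ∂μ = ∫ ω, M 0 ω ∂μ

/-- `M` is a local martingale w.r.t. `F`: there is a localizing sequence of stopping
times increasing to `∞` such that each stopped process is a martingale. -/
def IsLocalMartingale {m : MeasurableSpace Ω} (F : Filtration ℝ≥0∞ m) (μ : Measure Ω)
    (M : ℝ≥0∞ → Ω → ℝ) : Prop :=
  ∃ σ : ℕ → Ω → ℝ≥0∞, (∀ n, IsStoppingTime F (fun ω => ((σ n ω : ℝ≥0∞) : WithTop ℝ≥0∞))) ∧
    (∀ᵐ ω ∂μ, Tendsto (fun n => σ n ω) atTop (nhds ⊤)) ∧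
    ∀ n, Martingale (MeasureTheory.stoppedProcess M (fun ω => ((σ n ω : ℝ≥0∞) : WithTop ℝ≥0∞))) F μ

/-- `F` is immersed in `G`: every `F`-local martingale is a `G`-local martingale. -/
def Immersed {m : MeasurableSpace Ω} (F G : Filtration ℝ≥0∞ m) (μ : Measure Ω) : Prop :=
  ∀ M : ℝ≥0∞ → Ω → ℝ, IsLocalMartingale F μ M → IsLocalMartingale G μ M

/-- The raw increasing process `A = 1_{[τ,∞)}` associated with a random time `τ`. -/
def Aproc (τ : Ω → ℝ≥0∞) : ℝ≥0∞ → Ω → ℝ := fun t ω => if τ ω ≤ t then 1 else 0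

/-- The process `1_{[0,τ]}`. -/
def Bproc (τ : Ω → ℝ≥0∞) : ℝ≥0∞ → Ω → ℝ := fun t ω => if t ≤ τ ω then 1 else 0

/-- Left-limit process `V_{-}`, with the convention `V_{0-} = 0`. -/
def leftLimProc (V : ℝ≥0∞ → Ω → ℝ) : ℝ≥0∞ → Ω → ℝ :=
  fun t ω => if t = 0 then 0 else Function.leftLim (fun s => V s ω) t

/-- Jump process `ΔV_t = V_t - V_{t-}` (with `V_{0-} = 0`). -/
def jumpProc (V : ℝ≥0∞ → Ω → ℝ) : ℝ≥0∞ → Ω → ℝ :=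
  fun t ω => V t ω - leftLimProc V t ω

/-- `oV` is (a version of) the `F`-optional projection of the raw process `V`:
it is `F`-adapted and, for every `F`-stopping time `σ`,
`(oV)_σ = E[V_σ | F_σ]` a.s. (times are allowed to take the value `∞`). -/
def IsOptionalProjection {m : MeasurableSpace Ω} (F : Filtration ℝ≥0∞ m) (μ : Measure Ω)
    (V oV : ℝ≥0∞ → Ω → ℝ) : Prop :=
  Adapted F oV ∧ ∀ (σ : Ω → ℝ≥0∞) (hσ : IsStoppingTime F (fun ω => ((σ ω : ℝ≥0∞) : WithTop ℝ≥0∞))),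
    stoppedAt oV σ =ᵐ[μ] μ[stoppedAt V σ | hσ.measurableSpace]

/-- `Vo` is (a version of) the `F`-dual optional projection of the raw
finite-variation process `V`, where `oV` is the `F`-optional projection of `V`.
It is characterized as the `F`-adapted right-continuous finite-variation process
such that `N^V := oV - Vo` is a martingale vanishing at `0` and such that the jump
process of `Vo` is the optional projection of the jump process of `V`
(`°(ΔV) = ΔV°`). -/
structure IsDualOptionalProjection {m : MeasurableSpace Ω} (F : Filtration ℝ≥0∞ m)
    (μ : Measure Ω) (V oV Vo : ℝ≥0∞ → Ω → ℝ) : Prop where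
  adapted : Adapted F Vo
  rightCont : ∀ ω t, ContinuousWithinAt (fun s => Vo s ω) (Ici t) t
  finiteVariation : ∀ ω, ∃ W₁ W₂ : ℝ≥0∞ → ℝ, Monotone W₁ ∧ Monotone W₂ ∧
    ∀ t, Vo t ω = W₁ t - W₂ t
  martingale : Martingale (fun t ω => oV t ω - Vo t ω) F μ
  init : (fun ω => oV 0 ω - Vo 0 ω) =ᵐ[μ] 0
  jumpProj : ∀ (σ : Ω → ℝ≥0∞) (hσ : IsStoppingTime F (fun ω => ((σ ω : ℝ≥0∞) : WithTop ℝ≥0∞))),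
    stoppedAt (jumpProc Vo) σ =ᵐ[μ] μ[stoppedAt (jumpProc V) σ | hσ.measurableSpace]

/-- `τ` avoids all finite `F`-stopping times: `P(τ = σ < ∞) = 0` for every
`F`-stopping time `σ`. -/
def AvoidsStoppingTimes {m : MeasurableSpace Ω} (F : Filtration ℝ≥0∞ m) (μ : Measure Ω)
    (τ : Ω → ℝ≥0∞) : Prop :=
  ∀ σ : Ω → ℝ≥0∞, IsStoppingTime F (fun ω => ((σ ω : ℝ≥0∞) : WithTop ℝ≥0∞)) → μ {ω | τ ω = σ ω ∧ τ ω ≠ ⊤} = 0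

/-- `τ` is an `F`-honest time: for every `t > 0` there is an `F t`-measurable
random variable `τt` with `τ = τt` on `{τ < t}`. -/
def IsHonestTime {m : MeasurableSpace Ω} (F : Filtration ℝ≥0∞ m) (μ : Measure Ω)
    (τ : Ω → ℝ≥0∞) : Prop :=
  ∀ t : ℝ≥0∞, 0 < t → ∃ τt : Ω → ℝ≥0∞, Measurable[F t] τt ∧
    ∀ᵐ ω ∂μ, τ ω < t → τ ω = τt ω

/-- `τ` is equal to an `F`-stopping time on the event `{τ < ∞}`. -/
def EqualsStoppingTimeOnFinite {m : MeasurableSpace Ω} (F : Filtration ℝ≥0∞ m)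
    (μ : Measure Ω) (τ : Ω → ℝ≥0∞) : Prop :=
  ∃ σ : Ω → ℝ≥0∞, IsStoppingTime F (fun ω => ((σ ω : ℝ≥0∞) : WithTop ℝ≥0∞)) ∧ ∀ᵐ ω ∂μ, τ ω ≠ ⊤ → τ ω = σ ω


/-!
For `s ≤ t` and `A ∈ G_s`, the time equal to `s` on `A` and to `t` off `A` is a `G`-stopping
time. Being `F`-pseudo-stopping, it gives `E[X_ν] = E[X_0] = E[X_t]` for every uniformly
integrable `F`-martingale `X`, which is `∫_A X_s = ∫_A X_t`: `X` is a `G`-martingale.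
Localizing `F`-stopping times are `G`-stopping times, so `F`-local martingales are
`G`-local martingales.
-/

section

variable {m : MeasurableSpace Ω} {μ : Measure Ω}

theorem martingale_of_setIntegral_eq {ι E : Type*} [Preorder ι] [NormedAddCommGroup E]
    [NormedSpace ℝ E] [CompleteSpace E] {ℱ : Filtration ι m} [SigmaFiniteFiltration μ ℱ]
    {f : ι → Ω → E}
    (hadp : StronglyAdapted ℱ f) (hint : ∀ i, Integrable (f i) μ)
    (hf : ∀ i j, i ≤ j → ∀ s, MeasurableSet[ℱ i] s → ∫ ω in s, f i ω ∂μ = ∫ ω in s, f j ω ∂μ) :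
    Martingale f ℱ μ :=
  ⟨hadp, fun i j hij => (ae_eq_condExp_of_forall_setIntegral_eq (ℱ.le i) (hint j)
    (fun _ _ _ => (hint i).integrableOn) (fun s hs _ => hf i j hij s hs)
    (hadp i).aestronglyMeasurable).symm⟩

theorem stoppedAt_piecewise_const (X : ℝ≥0∞ → Ω → ℝ) (A : Set Ω) [DecidablePred (· ∈ A)]
    (s t : ℝ≥0∞) :
    stoppedAt X (A.piecewise (fun _ => s) fun _ => t) = A.piecewise (X s) (X t) := by
  ext ω
  by_cases hω : ω ∈ A <;> simp [stoppedAt, hω]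

theorem martingale_of_integral_stoppedAt_eq [IsFiniteMeasure μ] {G : Filtration ℝ≥0∞ m} {X : ℝ≥0∞ → Ω → ℝ}
    (hadp : StronglyAdapted G X) (hint : ∀ t, Integrable (X t) μ)
    (hX : ∀ ν : Ω → ℝ≥0∞, IsStoppingTime G (fun ω => ((ν ω : ℝ≥0∞) : WithTop ℝ≥0∞)) →
      ∫ ω, stoppedAt X ν ω ∂μ = ∫ ω, X 0 ω ∂μ) :
    Martingale X G μ := by
  refine martingale_of_setIntegral_eq hadp hint fun s t hst A hA => ?_
  classical
  have hAm : MeasurableSet A := G.le s A hA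
  have hν : IsStoppingTime G
      fun ω => ((A.piecewise (fun _ => s) (fun _ => t) ω : ℝ≥0∞) : WithTop ℝ≥0∞) := by
    convert isStoppingTime_piecewise_const hst hA using 1
    ext ω
    by_cases hω : ω ∈ A <;> simp [hω]
  have h_two_valued := hX _ hν
  have h_const : ∫ ω, X t ω ∂μ = ∫ ω, X 0 ω ∂μ := hX (fun _ => t) (isStoppingTime_const G t)
  rw [stoppedAt_piecewise_const,
    integral_piecewise hAm (hint s).integrableOn (hint t).integrableOn] at h_two_valued
  rw [← integral_add_compl hAm (hint t)] at h_const
  linarith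

theorem immersed_of_forall_martingale {F G : Filtration ℝ≥0∞ m} (hFG : F ≤ G)
    (hmart : ∀ X : ℝ≥0∞ → Ω → ℝ, Martingale X F μ → Martingale X G μ) : Immersed F G μ := by
  rintro M ⟨σ, hσ, hσ_tendsto, hσ_mart⟩
  exact ⟨σ, fun n t => hFG t _ (hσ n t), hσ_tendsto, fun n => hmart _ (hσ_mart n)⟩

end

/-- If every `G`-stopping time is an `F`-pseudo-stopping time,
then `F` is immersed in `G`. -/
theorem pseudoStoppingTimes_imply_immersion
    {m : MeasurableSpace Ω} (μ : Measure Ω) [IsProbabilityMeasure μ]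
    (F G : Filtration ℝ≥0∞ m) (hFG : ∀ t, F t ≤ G t)
    (h : ∀ ν : Ω → ℝ≥0∞, IsStoppingTime G (fun ω => ((ν ω : ℝ≥0∞) : WithTop ℝ≥0∞)) → IsPseudoStoppingTime F μ ν) :
    Immersed F G μ := by
  refine immersed_of_forall_martingale hFG fun X hX => ?_
  exact martingale_of_integral_stoppedAt_eq (fun t => (hX.stronglyAdapted t).mono (hFG t))
    hX.integrable fun ν hν => h ν hν X hX hX.integrable

end PaperPST
end
end

section
/- Any G-stopping time τ can be decomposed as τ = τ_c ∧ τ_d, where τ_c := τ·1_{D^c} + ∞·1_D and τ_d := τ·1_D + ∞·1_{D^c} with D := {ΔA°_τ > 0} ∈ G_τ; both τ_c and τ_d are G-stopping times, τ_c avoids all finite F-stopping times, and the graph of τ_d is contained in the union of the graphs of the jump times of A°. -/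
open MeasureTheory Filter Function Set
open scoped ENNReal NNReal

noncomputable section

namespace PaperPST

variable {Ω : Type*}

/-! The event `D` is `G_τ`-measurable because the jump process of the right-continuous,
finite-variation process `A°` is progressive: `A°` is the limit of its values at countably-valued
times approximating from the right, and `A°_-` the limit of its values at times approximating
strictly from the left.

Off `D`, `τ` avoids `F`-stopping times `σ`: the jump of `A = 1_{[τ,∞)}` at `σ` is `1_{τ = σ}`, so
`ΔA°_σ = P(τ = σ | F_σ)`, and the conditional probability of an event is a.s. positive on it;
hence `τ = σ` forces `ΔA°_σ > 0` almost surely. -/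

open TopologicalSpace
open scoped Topology

section Approximation

def upperApprox : ℕ → ℝ≥0∞ → ℝ≥0∞
  | 0, _ => ⊤
  | n + 1, s => min (upperApprox n s) (if s ≤ denseSeq ℝ≥0∞ n then denseSeq ℝ≥0∞ n else ⊤)

def lowerApprox : ℕ → ℝ≥0∞ → ℝ≥0∞
  | 0, _ => 0
  | n + 1, s => max (lowerApprox n s) (if denseSeq ℝ≥0∞ n < s then denseSeq ℝ≥0∞ n else 0)

lemma le_upperApprox (n : ℕ) (s : ℝ≥0∞) : s ≤ upperApprox n s := by
  induction n with
  | zero => exact le_top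
  | succ n ih => exact le_min ih (by split_ifs <;> simp_all)

lemma upperApprox_mem (n : ℕ) (s : ℝ≥0∞) :
    upperApprox n s ∈ insert ⊤ (range (denseSeq ℝ≥0∞)) := by
  induction n with
  | zero => exact mem_insert _ _
  | succ n ih =>
    rcases min_choice (upperApprox n s) (if s ≤ denseSeq ℝ≥0∞ n then denseSeq ℝ≥0∞ n else ⊤)
      with h | h <;> rw [upperApprox, h]
    · exact ih
    · split_ifs
      exacts [Or.inr (mem_range_self n), mem_insert _ _]

lemma measurable_upperApprox (n : ℕ) : Measurable (upperApprox n) := by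
  induction n with
  | zero => exact measurable_const
  | succ n ih => exact ih.min (measurable_const.ite measurableSet_Iic measurable_const)

lemma tendsto_upperApprox (s : ℝ≥0∞) : Tendsto (upperApprox · s) atTop (𝓝 s) := by
  have hinf : ⨅ n, upperApprox n s = s := by
    refine le_antisymm ?_ (le_iInf (le_upperApprox · s))
    by_contra! h
    obtain ⟨n, hsn, hn⟩ :=
      (denseRange_denseSeq ℝ≥0∞).exists_mem_open isOpen_Ioo (nonempty_Ioo.2 h)
    have : upperApprox (n + 1) s ≤ denseSeq ℝ≥0∞ n := by
      rw [upperApprox, if_pos hsn.le]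
      exact min_le_right _ _
    exact ((iInf_le _ (n + 1)).trans this).not_gt hn
  have hanti : Antitone (upperApprox · s) := antitone_nat_of_succ_le fun n => min_le_left _ _
  simpa only [hinf] using tendsto_atTop_iInf hanti

lemma lowerApprox_le (n : ℕ) (s : ℝ≥0∞) : lowerApprox n s ≤ s := by
  induction n with
  | zero => exact bot_le
  | succ n ih => exact max_le ih (by split_ifs with h; exacts [h.le, bot_le])

lemma lowerApprox_lt (n : ℕ) {s : ℝ≥0∞} (hs : s ≠ 0) : lowerApprox n s < s := by
  induction n with
  | zero => exact pos_iff_ne_zero.2 hs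
  | succ n ih => exact max_lt ih (by split_ifs with h; exacts [h, pos_iff_ne_zero.2 hs])

lemma measurable_lowerApprox (n : ℕ) : Measurable (lowerApprox n) := by
  induction n with
  | zero => exact measurable_const
  | succ n ih => exact ih.max (measurable_const.ite measurableSet_Ioi measurable_const)

lemma tendsto_lowerApprox {s : ℝ≥0∞} (hs : s ≠ 0) :
    Tendsto (lowerApprox · s) atTop (𝓝[<] s) := by
  have hsup : ⨆ n, lowerApprox n s = s := by
    refine le_antisymm (iSup_le (lowerApprox_le · s)) ?_
    by_contra! h
    obtain ⟨n, hn, hns⟩ :=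
      (denseRange_denseSeq ℝ≥0∞).exists_mem_open isOpen_Ioo (nonempty_Ioo.2 h)
    have : denseSeq ℝ≥0∞ n ≤ lowerApprox (n + 1) s := by
      rw [lowerApprox, if_pos hns]
      exact le_max_right _ _
    exact (this.trans (le_iSup (lowerApprox · s) (n + 1))).not_gt hn
  refine tendsto_nhdsWithin_of_tendsto_nhds_of_eventually_within _ ?_
    (.of_forall (lowerApprox_lt · hs))
  have hmono : Monotone (lowerApprox · s) := monotone_nat_of_le_succ fun n => le_max_left _ _
  simpa only [hsup] using tendsto_atTop_iSup hmono

end Approximation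

section Progressive

lemma measurable_comp_of_countable_values {ι α β : Type*} [MeasurableSpace ι]
    [MeasurableSingletonClass ι] [MeasurableSpace α] [MeasurableSpace β]
    {X : ι → α → β} {h : α → ι} {S : Set ι} (hS : S.Countable) (hhS : ∀ a, h a ∈ S)
    (hh : Measurable h) (hX : ∀ v ∈ S, Measurable (X v)) :
    Measurable fun a => X (h a) a := by
  have := hS.to_subtype
  have hXS : Measurable fun q : S × α => X q.1 q.2 :=
    measurable_from_prod_countable_right fun v => hX v v.2
  exact hXS.comp ((hh.subtype_mk (h := hhS)).prodMk measurable_id)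

theorem isStronglyProgressive_of_rightContinuous {β : Type*} [TopologicalSpace β]
    [PseudoMetrizableSpace β] [SecondCountableTopology β] [MeasurableSpace β] [BorelSpace β]
    {m : MeasurableSpace Ω} {f : Filtration ℝ≥0∞ m} {X : ℝ≥0∞ → Ω → β} (hX : Adapted f X)
    (hrc : ∀ ω t, ContinuousWithinAt (X · ω) (Ici t) t) : IsStronglyProgressive f X := by
  intro t
  let _ : MeasurableSpace Ω := f t
  refine Measurable.stronglyMeasurable (measurable_of_tendsto_metrizable' atTop
    (f := fun n (p : Iic t × Ω) => X (min (upperApprox n p.1) t) p.2) (fun n => ?_) ?_)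
  · refine measurable_comp_of_countable_values (X := fun v p => X v p.2)
      (((countable_range _).insert ⊤).image (min · t))
      (fun p => mem_image_of_mem _ (upperApprox_mem n _))
      (((measurable_upperApprox n).comp (measurable_subtype_coe.comp measurable_fst)).min
        measurable_const) ?_
    rintro _ ⟨v, -, rfl⟩
    exact ((hX _).mono (f.mono (min_le_right v t)) le_rfl).comp measurable_snd
  · refine tendsto_pi_nhds.2 fun ⟨⟨s, hs⟩, ω⟩ => (hrc ω s).tendsto.comp ?_
    refine tendsto_nhdsWithin_of_tendsto_nhds_of_eventually_within _
      (tendsto_of_tendsto_of_tendsto_of_le_of_le tendsto_const_nhds (tendsto_upperApprox s)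
        (fun n => le_min (le_upperApprox n s) hs) (fun n => min_le_left _ _))
      (.of_forall fun n => le_min (le_upperApprox n s) hs)

theorem isStronglyProgressive_leftLimProc {m : MeasurableSpace Ω} {f : Filtration ℝ≥0∞ m}
    {X : ℝ≥0∞ → Ω → ℝ} (hX : IsStronglyProgressive f X)
    (hlim : ∀ ω s, s ≠ 0 → Tendsto (X · ω) (𝓝[<] s) (𝓝 (leftLimProc X s ω))) :
    IsStronglyProgressive f (leftLimProc X) := by
  have hU : ∀ n, IsStronglyProgressive f fun s ω =>
      if s = 0 then 0 else X (lowerApprox n s) ω := by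
    intro n t
    have hlower : IsStronglyProgressive f fun s (_ : Ω) => lowerApprox n s := fun _ =>
      ((measurable_lowerApprox n).comp (measurable_subtype_coe.comp measurable_fst))
        |>.stronglyMeasurable
    exact StronglyMeasurable.ite ((measurable_subtype_coe.comp measurable_fst)
      (measurableSet_singleton 0)) stronglyMeasurable_const
      (hX.comp hlower (fun s _ => lowerApprox_le n s) t)
  refine isStronglyProgressive_of_tendsto hU
    (tendsto_pi_nhds.2 fun s => tendsto_pi_nhds.2 fun ω => ?_)
  rcases eq_or_ne s 0 with rfl | hs
  · simp [leftLimProc]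
  · simpa [hs, Function.comp_def] using (hlim ω s hs).comp (tendsto_lowerApprox hs)

lemma tendsto_leftLim_of_eq_sub_monotone {α : Type*} [LinearOrder α] [TopologicalSpace α]
    [OrderTopology α] {g W₁ W₂ : α → ℝ} (h₁ : Monotone W₁) (h₂ : Monotone W₂)
    (hg : ∀ t, g t = W₁ t - W₂ t) (a : α) : Tendsto g (𝓝[<] a) (𝓝 (leftLim g a)) :=
  tendsto_leftLim_of_tendsto
    ⟨_, ((h₁.tendsto_leftLim a).sub (h₂.tendsto_leftLim a)).congr fun t => (hg t).symm⟩

theorem isStronglyProgressive_jumpProc {m : MeasurableSpace Ω} {f : Filtration ℝ≥0∞ m}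
    {X : ℝ≥0∞ → Ω → ℝ} (hX : Adapted f X) (hrc : ∀ ω t, ContinuousWithinAt (X · ω) (Ici t) t)
    (hfv : ∀ ω, ∃ W₁ W₂ : ℝ≥0∞ → ℝ, Monotone W₁ ∧ Monotone W₂ ∧ ∀ t, X t ω = W₁ t - W₂ t) :
    IsStronglyProgressive f (jumpProc X) := by
  have hprog := isStronglyProgressive_of_rightContinuous hX hrc
  refine hprog.sub (isStronglyProgressive_leftLimProc hprog fun ω s hs => ?_)
  obtain ⟨W₁, W₂, h₁, h₂, hW⟩ := hfv ω
  simpa only [leftLimProc, if_neg hs] using tendsto_leftLim_of_eq_sub_monotone h₁ h₂ hW s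

end Progressive

section StoppingTimes

lemma measurable_of_isStoppingTime_coe {ι : Type*} [LinearOrder ι] [TopologicalSpace ι]
    [OrderTopology ι] [SecondCountableTopology ι] [MeasurableSpace ι] [BorelSpace ι]
    {m : MeasurableSpace Ω} {f : Filtration ι m} {τ : Ω → ι}
    (hτ : IsStoppingTime f fun ω => (τ ω : WithTop ι)) : Measurable τ :=
  measurable_of_Iic fun i => f.le i _
    (by simpa only [WithTop.coe_le_coe] using hτ i : MeasurableSet[f i] {ω | τ ω ≤ i})

lemma isStoppingTime_ite_top {ι : Type*} [LinearOrder ι] [OrderTop ι] {m : MeasurableSpace Ω}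
    {f : Filtration ι m} {τ : Ω → ι} (hτ : IsStoppingTime f fun ω => (τ ω : WithTop ι))
    {p : Ω → Prop} [DecidablePred p] (hp : MeasurableSet[hτ.measurableSpace] {ω | p ω}) :
    IsStoppingTime f fun ω => ((if p ω then τ ω else ⊤ : ι) : WithTop ι) := by
  intro t
  rcases eq_or_ne t ⊤ with rfl | ht
  · simp
  · convert hp.2 t using 1
    ext ω
    by_cases hω : p ω <;> simp [hω, ht]

lemma jumpProc_Aproc (τ : Ω → ℝ≥0∞) (s : ℝ≥0∞) (ω : Ω) :
    jumpProc (Aproc τ) s ω = if τ ω = s then 1 else 0 := by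
  rcases eq_or_ne s 0 with rfl | hs
  · simp [jumpProc, leftLimProc, Aproc]
  have : NeZero s := ⟨hs⟩
  rcases lt_or_ge (τ ω) s with hlt | hle
  · have hL : leftLim (fun x => if τ ω ≤ x then (1 : ℝ) else 0) s = 1 :=
      leftLim_eq_of_tendsto (tendsto_const_nhds.congr' <| by
        filter_upwards [Ioo_mem_nhdsLT hlt] with x hx
        simp [hx.1.le])
    simp [jumpProc, leftLimProc, hs, hL, Aproc, hlt.le, hlt.ne]
  · have hL : leftLim (fun x => if τ ω ≤ x then (1 : ℝ) else 0) s = 0 :=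
      leftLim_eq_of_tendsto (tendsto_const_nhds.congr' <| by
        filter_upwards [self_mem_nhdsWithin] with x hx
        simp [(hx.trans_le hle).not_ge])
    simp [jumpProc, leftLimProc, hs, hL, Aproc, le_antisymm_iff, hle]

end StoppingTimes

section Avoidance

lemma ae_pos_condExp_indicator_of_mem {m m₀ : MeasurableSpace Ω} {μ : Measure Ω}
    [IsFiniteMeasure μ] (hm : m ≤ m₀) {B : Set Ω} (hB : MeasurableSet[m₀] B) :
    ∀ᵐ ω ∂μ, ω ∈ B → 0 < μ[B.indicator (1 : Ω → ℝ) | m] ω := by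
  set E := {ω | μ[B.indicator (1 : Ω → ℝ) | m] ω ≤ 0}
  have hE : MeasurableSet[m] E :=
    measurableSet_le stronglyMeasurable_condExp.measurable measurable_const
  have hEB : μ.real (E ∩ B) ≤ 0 := calc
    μ.real (E ∩ B) = ∫ ω in E, B.indicator (1 : Ω → ℝ) ω ∂μ := by
      rw [setIntegral_indicator hB, Pi.one_def, setIntegral_const, smul_eq_mul, mul_one]
    _ = ∫ ω in E, μ[B.indicator (1 : Ω → ℝ) | m] ω ∂μ :=
      (setIntegral_condExp hm ((integrable_const 1).indicator hB) hE).symm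
    _ ≤ 0 := setIntegral_nonpos (hm _ hE) fun _ hω => hω
  rw [ae_iff]
  refine measure_mono_null (fun ω hω => ?_)
    ((measureReal_eq_zero_iff).1 (le_antisymm hEB measureReal_nonneg))
  push Not at hω
  exact ⟨hω.2, hω.1⟩

theorem IsDualOptionalProjection.ae_jumpProc_pos_of_eq {m : MeasurableSpace Ω} {μ : Measure Ω}
    [IsFiniteMeasure μ] {F : Filtration ℝ≥0∞ m} {τ : Ω → ℝ≥0∞} {oA Ao : ℝ≥0∞ → Ω → ℝ}
    (hAo : IsDualOptionalProjection F μ (Aproc τ) oA Ao) (hτ : Measurable τ) {σ : Ω → ℝ≥0∞}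
    (hσ : IsStoppingTime F fun ω => (σ ω : WithTop ℝ≥0∞)) :
    ∀ᵐ ω ∂μ, τ ω = σ ω → 0 < jumpProc Ao (σ ω) ω := by
  have hjump : stoppedAt (jumpProc (Aproc τ)) σ = {ω | τ ω = σ ω}.indicator 1 := by
    ext ω
    simp [stoppedAt, jumpProc_Aproc, indicator_apply]
  have hB : MeasurableSet {ω | τ ω = σ ω} :=
    measurableSet_eq_fun hτ (measurable_of_isStoppingTime_coe hσ)
  filter_upwards [hAo.jumpProj σ hσ, ae_pos_condExp_indicator_of_mem hσ.measurableSpace_le hB]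
    with ω hω hpos hτσ
  rw [hjump] at hω
  change 0 < stoppedAt (jumpProc Ao) σ ω
  rw [hω]
  exact hpos hτσ

lemma avoidsStoppingTimes_ite_top {m : MeasurableSpace Ω} {μ : Measure Ω}
    {F : Filtration ℝ≥0∞ m} {τ : Ω → ℝ≥0∞} {J : ℝ≥0∞ → Ω → ℝ}
    (hJ : ∀ σ : Ω → ℝ≥0∞, IsStoppingTime F (fun ω => (σ ω : WithTop ℝ≥0∞)) →
      ∀ᵐ ω ∂μ, τ ω = σ ω → 0 < J (σ ω) ω) :
    AvoidsStoppingTimes F μ fun ω => if 0 < J (τ ω) ω then ⊤ else τ ω := by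
  intro σ hσ
  refine measure_mono_null (fun ω ⟨heq, hne⟩ => ?_) (ae_iff.1 (hJ σ hσ))
  dsimp only at heq hne
  split_ifs at heq hne with hω
  · exact absurd rfl hne
  · exact fun h => hω (by rw [heq]; exact h heq)

end Avoidance

theorem stoppingTime_decomposition_general
    {m : MeasurableSpace Ω} (μ : Measure Ω) [IsProbabilityMeasure μ]
    (F G : Filtration ℝ≥0∞ m) (hFG : ∀ t, F t ≤ G t)
    (τ : Ω → ℝ≥0∞) (hτ : IsStoppingTime G (fun ω => ((τ ω : ℝ≥0∞) : WithTop ℝ≥0∞)))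
    (oA Ao : ℝ≥0∞ → Ω → ℝ)
    (hAo : IsDualOptionalProjection F μ (Aproc τ) oA Ao) :
    (∀ ω, τ ω = min (if 0 < jumpProc Ao (τ ω) ω then ⊤ else τ ω)
                    (if 0 < jumpProc Ao (τ ω) ω then τ ω else ⊤)) ∧
    MeasurableSet[hτ.measurableSpace] {ω | 0 < jumpProc Ao (τ ω) ω} ∧
    IsStoppingTime G (fun ω => (((if 0 < jumpProc Ao (τ ω) ω then ⊤ else τ ω : ℝ≥0∞)) : WithTop ℝ≥0∞)) ∧
    IsStoppingTime G (fun ω => (((if 0 < jumpProc Ao (τ ω) ω then τ ω else ⊤ : ℝ≥0∞)) : WithTop ℝ≥0∞)) ∧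
    AvoidsStoppingTimes F μ (fun ω => if 0 < jumpProc Ao (τ ω) ω then ⊤ else τ ω) ∧
    (∀ ω, (if 0 < jumpProc Ao (τ ω) ω then τ ω else ⊤) ≠ ⊤ →
      0 < jumpProc Ao ((if 0 < jumpProc Ao (τ ω) ω then τ ω else ⊤) : ℝ≥0∞) ω) := by
  have hJ : IsStronglyProgressive G (jumpProc Ao) := isStronglyProgressive_jumpProc
    (fun t => (hAo.adapted t).mono (hFG t) le_rfl) hAo.rightCont hAo.finiteVariation
  have hD : MeasurableSet[hτ.measurableSpace] {ω | 0 < jumpProc Ao (τ ω) ω} :=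
    measurable_stoppedValue hJ hτ measurableSet_Ioi
  refine ⟨fun ω => ?_, hD, ?_, isStoppingTime_ite_top hτ hD,
    avoidsStoppingTimes_ite_top fun σ hσ =>
      hAo.ae_jumpProc_pos_of_eq (measurable_of_isStoppingTime_coe hτ) hσ, fun ω h => ?_⟩
  · split_ifs <;> simp
  · have hτc := isStoppingTime_ite_top (p := fun ω => ¬0 < jumpProc Ao (τ ω) ω) hτ hD.compl
    simp only [ite_not] at hτc
    exact hτc
  · split_ifs at h ⊢ with hω
    exacts [hω, absurd rfl h]

/-- Any `G`-stopping time `τ` decomposes as `τ = τc ∧ τd`, where,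
with `D := {ΔA°_τ > 0} ∈ G_τ`, `τc := τ·1_{Dᶜ} + ∞·1_D` and `τd := τ·1_D + ∞·1_{Dᶜ}`
are `G`-stopping times, `τc` avoids all finite `F`-stopping times, and the graph of
`τd` is contained in the union of the graphs of the jump times of `A°`. -/
theorem stoppingTime_decomposition
    {m : MeasurableSpace Ω} (μ : Measure Ω) [IsProbabilityMeasure μ]
    (F G : Filtration ℝ≥0∞ m) (hFG : ∀ t, F t ≤ G t)
    (τ : Ω → ℝ≥0∞) (hτ : IsStoppingTime G (fun ω => ((τ ω : ℝ≥0∞) : WithTop ℝ≥0∞)))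
    (oA Ao : ℝ≥0∞ → Ω → ℝ)
    (hoA : IsOptionalProjection F μ (Aproc τ) oA)
    (hAo : IsDualOptionalProjection F μ (Aproc τ) oA Ao) :
    (∀ ω, τ ω = min (if 0 < jumpProc Ao (τ ω) ω then ⊤ else τ ω)
                    (if 0 < jumpProc Ao (τ ω) ω then τ ω else ⊤)) ∧
    MeasurableSet[hτ.measurableSpace] {ω | 0 < jumpProc Ao (τ ω) ω} ∧
    IsStoppingTime G (fun ω => (((if 0 < jumpProc Ao (τ ω) ω then ⊤ else τ ω : ℝ≥0∞)) : WithTop ℝ≥0∞)) ∧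
    IsStoppingTime G (fun ω => (((if 0 < jumpProc Ao (τ ω) ω then τ ω else ⊤ : ℝ≥0∞)) : WithTop ℝ≥0∞)) ∧
    AvoidsStoppingTimes F μ (fun ω => if 0 < jumpProc Ao (τ ω) ω then ⊤ else τ ω) ∧
    (∀ ω, (if 0 < jumpProc Ao (τ ω) ω then τ ω else ⊤) ≠ ⊤ →
      0 < jumpProc Ao ((if 0 < jumpProc Ao (τ ω) ω then τ ω else ⊤) : ℝ≥0∞) ω) :=
  stoppingTime_decomposition_general μ F G hFG τ hτ oA Ao hAo

end PaperPST
end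
end
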